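/- arXiv:1704.08135 — 2 statements merged into one kernel-verified Lean document; each statement's English description precedes it below -/
import Mathlib

section
/- Let T be a power bounded operator on a Hilbert space H with constant C (‖Tⁿ‖ ≤ C for n ≥ 0). Then for every 1 < r < 2 and every x ∈ H, the integral over the circle |λ| = r of ‖(T - λ)^{-1} x‖² |dλ| is at most C' ‖x‖²/(r - 1), where C' depends only on C. -/
open Real Filter Topology Finset intervalIntegral ComplexConjugate

/-!
Because `‖Tⁿ‖ ≤ C` and `|λ| = r > 1`, the Neumann series gives
`-(T - λ)⁻¹ x = ∑ₙ λ^{-(n+1)} Tⁿ x`. On the circle `λ = r e^{iθ}` the functions `θ ↦ λ^{-(n+1)}`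
are orthogonal in `L²(0, 2π)` with squared norms `2π r^{-2(n+1)}`, so Pythagoras for the partial
sums and dominated convergence give
`∫ ‖(T - λ)⁻¹ x‖² dθ = 2π ∑ₙ r^{-2(n+1)} ‖Tⁿ x‖² ≤ 2π C² ‖x‖² / (r² - 1)`.
Multiplying by `r` and using `r / (r² - 1) ≤ 1 / (r - 1)` yields `C' = 2π C²`.
-/

theorem Ring.inverse_sub_smul_one_of_summable {𝕜 A : Type*} [Field 𝕜] [Ring A] [Algebra 𝕜 A]
    [TopologicalSpace A] [IsTopologicalRing A] [T2Space A] {a : A} {c : 𝕜} (hc : c ≠ 0)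
    (h : Summable fun n : ℕ ↦ (c⁻¹ • a) ^ n) :
    Ring.inverse (a - c • 1) = -c⁻¹ • ∑' n : ℕ, (c⁻¹ • a) ^ n := by
  have hfactor : a - c • 1 = (-c) • (1 - c⁻¹ • a) := by
    rw [smul_sub, smul_smul, neg_mul, mul_inv_cancel₀ hc, neg_smul, neg_smul, one_smul,
      sub_neg_eq_add, neg_add_eq_sub]
  exact Ring.inverse_unit
    ⟨a - c • 1, -c⁻¹ • ∑' n : ℕ, (c⁻¹ • a) ^ n,
      by rw [hfactor, smul_mul_smul_comm, neg_mul_neg, mul_inv_cancel₀ hc,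
        h.one_sub_mul_tsum_pow, one_smul],
      by rw [hfactor, smul_mul_smul_comm, neg_mul_neg, inv_mul_cancel₀ hc,
        h.tsum_pow_mul_one_sub, one_smul]⟩

theorem hasSum_neg_inverse_sub_smul_one_of_norm_pow_le {𝕜 A : Type*} [NontriviallyNormedField 𝕜]
    [NormedRing A] [NormedAlgebra 𝕜 A] [CompleteSpace A] {a : A} {C : ℝ}
    (ha : ∀ n : ℕ, ‖a ^ n‖ ≤ C) {c : 𝕜} (hc : 1 < ‖c‖) :
    HasSum (fun n : ℕ ↦ c⁻¹ ^ (n + 1) • a ^ n) (-Ring.inverse (a - c • 1)) := by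
  have hc0 : c ≠ 0 := norm_pos_iff.mp (one_pos.trans hc)
  have hsum : Summable fun n : ℕ ↦ (c⁻¹ • a) ^ n := by
    refine Summable.of_norm_bounded ((summable_geometric_of_lt_one (by positivity)
      (inv_lt_one_of_one_lt₀ hc)).mul_left C) fun n ↦ ?_
    rw [smul_pow, norm_smul, norm_pow, norm_inv, mul_comm]
    exact mul_le_mul_of_nonneg_right (ha n) (by positivity)
  rw [Ring.inverse_sub_smul_one_of_summable hc0 hsum, neg_smul, neg_neg]
  convert hsum.hasSum.const_smul c⁻¹ using 2 with n
  rw [smul_pow, smul_smul, pow_succ']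

theorem integral_circleMap_zero_zpow {k : ℤ} (hk : k ≠ 0) (r : ℝ) :
    ∫ θ in 0..2 * π, circleMap 0 r θ ^ k = 0 := by
  have hkI : (k : ℂ) * Complex.I ≠ 0 := mul_ne_zero (Int.cast_ne_zero.mpr hk) Complex.I_ne_zero
  have hlin : ∀ θ : ℝ, ((k * θ : ℝ) : ℂ) * Complex.I = k * Complex.I * θ := fun θ ↦ by
    push_cast; ring
  simp_rw [circleMap_zero_zpow, circleMap_zero, hlin]
  rw [integral_const_mul, integral_exp_mul_complex hkI, Complex.ofReal_zero, mul_zero,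
    Complex.exp_zero, show (k : ℂ) * Complex.I * (2 * π : ℝ) = k * (2 * π * Complex.I) by
      push_cast; ring, Complex.exp_int_mul_two_pi_mul_I, sub_self, zero_div, mul_zero]

theorem integral_conj_inv_pow_mul_inv_pow_circleMap {r : ℝ} (hr : r ≠ 0) (n m : ℕ) :
    ∫ θ in 0..2 * π, conj ((circleMap 0 r θ)⁻¹ ^ n) * (circleMap 0 r θ)⁻¹ ^ m =
      if n = m then ((2 * π * (r ^ 2)⁻¹ ^ n : ℝ) : ℂ) else 0 := by
  have hpoint : ∀ θ, conj ((circleMap 0 r θ)⁻¹ ^ n) * (circleMap 0 r θ)⁻¹ ^ m =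
      (((r ^ 2)⁻¹ ^ n : ℝ) : ℂ) * circleMap 0 r θ ^ ((n : ℤ) - m) := by
    intro θ
    set z := circleMap 0 r θ
    have hz : z ≠ 0 := circleMap_ne_center hr
    have hconj : conj z = (r : ℂ) ^ 2 / z := by
      rw [eq_div_iff hz, mul_comm, Complex.mul_conj, Complex.normSq_eq_norm_sq,
        norm_circleMap_zero, sq_abs, Complex.ofReal_pow]
    rw [map_pow, map_inv₀, hconj, zpow_sub₀ hz, zpow_natCast, zpow_natCast, inv_div]
    push_cast
    ring
  simp_rw [hpoint]
  rw [integral_const_mul]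
  split_ifs with h
  · simp only [h, sub_self, zpow_zero, mul_one, integral_const, sub_zero, Complex.real_smul]
    push_cast
    ring
  · rw [integral_circleMap_zero_zpow (sub_ne_zero.mpr (by exact_mod_cast h)), mul_zero]

section Orthogonal

variable {𝕜 E : Type*} [RCLike 𝕜] [NormedAddCommGroup E] [InnerProductSpace 𝕜 E] {a b : ℝ}
  {e : ℕ → ℝ → 𝕜} {w : ℕ → ℝ}

theorem integral_norm_sq_sum_smul_of_orthogonal (he : ∀ n, Continuous (e n))
    (horth : ∀ n m, ∫ θ in a..b, conj (e n θ) * e m θ = if n = m then (w n : 𝕜) else 0)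
    (v : ℕ → E) (s : Finset ℕ) :
    ∫ θ in a..b, ‖∑ n ∈ s, e n θ • v n‖ ^ 2 = ∑ n ∈ s, w n * ‖v n‖ ^ 2 := by
  have hcont : ∀ n m, Continuous fun θ ↦ conj (e n θ) * e m θ * inner 𝕜 (v n) (v m) :=
    fun n m ↦ ((RCLike.continuous_conj.comp (he n)).mul (he m)).mul continuous_const
  apply RCLike.ofReal_injective (K := 𝕜)
  calc ((∫ θ in a..b, ‖∑ n ∈ s, e n θ • v n‖ ^ 2 : ℝ) : 𝕜)
      = ∫ θ in a..b, ∑ n ∈ s, ∑ m ∈ s, conj (e n θ) * e m θ * inner 𝕜 (v n) (v m) := by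
        rw [← RCLike.intervalIntegral_ofReal]
        congr 1 with θ
        rw [RCLike.ofReal_pow, ← inner_self_eq_norm_sq_to_K, sum_inner]
        simp_rw [inner_sum, inner_smul_left, inner_smul_right, mul_assoc]
    _ = ∑ n ∈ s, ∑ m ∈ s, (∫ θ in a..b, conj (e n θ) * e m θ) * inner 𝕜 (v n) (v m) := by
        rw [integral_finsetSum fun n _ ↦
          (continuous_finsetSum _ fun m _ ↦ hcont n m).intervalIntegrable a b]
        refine sum_congr rfl fun n _ ↦ ?_
        rw [integral_finsetSum fun m _ ↦ (hcont n m).intervalIntegrable a b]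
        simp_rw [integral_mul_const]
    _ = ((∑ n ∈ s, w n * ‖v n‖ ^ 2 : ℝ) : 𝕜) := by
        simp [horth, ite_mul, inner_self_eq_norm_sq_to_K]

theorem tendsto_sum_mul_norm_sq_integral_norm_sq_of_orthogonal (he : ∀ n, Continuous (e n))
    (horth : ∀ n m, ∫ θ in a..b, conj (e n θ) * e m θ = if n = m then (w n : 𝕜) else 0)
    {v : ℕ → E} {F : ℝ → E} (hF : ∀ θ, HasSum (fun n ↦ e n θ • v n) (F θ)) {g : ℕ → ℝ}
    (hg : Summable g) (hbound : ∀ n θ, ‖e n θ‖ * ‖v n‖ ≤ g n) :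
    Tendsto (fun N ↦ ∑ n ∈ range N, w n * ‖v n‖ ^ 2) atTop (𝓝 (∫ θ in a..b, ‖F θ‖ ^ 2)) := by
  simp_rw [← integral_norm_sq_sum_smul_of_orthogonal he horth]
  have hpartial (N : ℕ) (θ : ℝ) : ‖∑ n ∈ range N, e n θ • v n‖ ≤ ∑' n, g n := calc
    _ ≤ ∑ n ∈ range N, ‖e n θ • v n‖ := norm_sum_le _ _
    _ ≤ ∑ n ∈ range N, g n := sum_le_sum fun n _ ↦ (norm_smul_le _ _).trans (hbound n θ)
    _ ≤ ∑' n, g n := hg.sum_le_tsum _ fun n _ ↦ (by positivity : (0 : ℝ) ≤ _).trans (hbound n θ)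
  refine tendsto_integral_filter_of_dominated_convergence (fun _ ↦ (∑' n, g n) ^ 2)
    (Eventually.of_forall fun N ↦ ((continuous_finsetSum _ fun n _ ↦
      (he n).smul continuous_const).norm.pow 2).aestronglyMeasurable)
    (Eventually.of_forall fun N ↦ MeasureTheory.ae_of_all _ fun θ _ ↦ ?_)
    intervalIntegrable_const
    (MeasureTheory.ae_of_all _ fun θ _ ↦ (hF θ).tendsto_sum_nat.norm.pow 2)
  rw [Real.norm_of_nonneg (by positivity)]
  exact pow_le_pow_left₀ (norm_nonneg _) (hpartial N θ) 2

end Orthogonal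

theorem sum_range_pow_succ_mul_norm_pow_apply_sq_le {𝕜 E : Type*} [NontriviallyNormedField 𝕜]
    [NormedAddCommGroup E] [NormedSpace 𝕜 E] {T : E →L[𝕜] E} {C : ℝ}
    (hT : ∀ n : ℕ, ‖T ^ n‖ ≤ C) {q : ℝ} (hq0 : 0 ≤ q) (hq1 : q < 1) (x : E) (N : ℕ) :
    ∑ n ∈ range N, q ^ (n + 1) * ‖(T ^ n) x‖ ^ 2 ≤ C ^ 2 * ‖x‖ ^ 2 * q / (1 - q) := by
  have hC : 0 ≤ C := (norm_nonneg _).trans (hT 0)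
  calc ∑ n ∈ range N, q ^ (n + 1) * ‖(T ^ n) x‖ ^ 2
      ≤ ∑ n ∈ range N, q ^ (n + 1) * (C * ‖x‖) ^ 2 := sum_le_sum fun n _ ↦
        mul_le_mul_of_nonneg_left (pow_le_pow_left₀ (norm_nonneg _)
          ((T ^ n).le_of_opNorm_le (hT n) x) 2) (by positivity)
    _ = C ^ 2 * ‖x‖ ^ 2 * (q * ∑ n ∈ range N, q ^ n) := by
        simp_rw [mul_sum, pow_succ']; ring_nf
    _ ≤ C ^ 2 * ‖x‖ ^ 2 * (q * (1 - q)⁻¹) := by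
        refine mul_le_mul_of_nonneg_left (mul_le_mul_of_nonneg_left ?_ hq0) (by positivity)
        simpa only [← range_eq_Ico, pow_zero, one_div] using
          geom_sum_Ico_le_of_lt_one (m := 0) (n := N) hq0 hq1
    _ = C ^ 2 * ‖x‖ ^ 2 * q / (1 - q) := by ring

theorem tendsto_sum_integral_norm_sq_inverse_sub_circleMap {H : Type*}
    [NormedAddCommGroup H] [InnerProductSpace ℂ H] [CompleteSpace H] {T : H →L[ℂ] H} {C : ℝ}
    (hT : ∀ n : ℕ, ‖T ^ n‖ ≤ C) {r : ℝ} (hr : 1 < r) (x : H) :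
    Tendsto (fun N ↦ ∑ n ∈ range N, 2 * π * (r ^ 2)⁻¹ ^ (n + 1) * ‖(T ^ n) x‖ ^ 2) atTop
      (𝓝 (∫ θ in 0..2 * π, ‖Ring.inverse (T - circleMap 0 r θ • 1) x‖ ^ 2)) := by
  have hr0 : 0 < r := zero_lt_one.trans hr
  have hnorm (θ : ℝ) : ‖circleMap 0 r θ‖ = r := by rw [norm_circleMap_zero, abs_of_pos hr0]
  have hq0 : 0 ≤ r⁻¹ := inv_nonneg.mpr hr0.le
  have hq1 : r⁻¹ < 1 := inv_lt_one_of_one_lt₀ hr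
  simpa only [norm_neg] using
    tendsto_sum_mul_norm_sq_integral_norm_sq_of_orthogonal
    (e := fun n θ ↦ (circleMap 0 r θ)⁻¹ ^ (n + 1)) (w := fun n ↦ 2 * π * (r ^ 2)⁻¹ ^ (n + 1))
    (v := fun n ↦ (T ^ n) x) (F := fun θ ↦ -Ring.inverse (T - circleMap 0 r θ • 1) x)
    (fun n ↦ ((continuous_circleMap 0 r).inv₀ fun _ ↦ circleMap_ne_center hr0.ne').pow _)
    (fun n m ↦ by simpa using integral_conj_inv_pow_mul_inv_pow_circleMap hr0.ne' (n + 1) (m + 1))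
    (fun θ ↦ by
      simpa using (hasSum_neg_inverse_sub_smul_one_of_norm_pow_le hT (c := circleMap 0 r θ)
        (by rw [hnorm]; exact hr)).mapL (ContinuousLinearMap.apply ℂ H x))
    ((summable_nat_add_iff 1).mpr ((summable_geometric_of_lt_one hq0 hq1).mul_left (C * ‖x‖)))
    (fun n θ ↦ by
      rw [norm_pow, norm_inv, hnorm, mul_comm]
      exact mul_le_mul_of_nonneg_right ((T ^ n).le_of_opNorm_le (hT n) x) (by positivity))

theorem stmt5 {H : Type*} [NormedAddCommGroup H] [InnerProductSpace ℂ H]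
    [CompleteSpace H] (C : ℝ) :
    ∃ C' : ℝ, ∀ (T : H →L[ℂ] H), (∀ n : ℕ, ‖T ^ n‖ ≤ C) →
      ∀ (r : ℝ), 1 < r → r < 2 → ∀ x : H,
        (∫ θ in (0:ℝ)..(2*π),
            ‖Ring.inverse (T - circleMap 0 r θ • (1 : H →L[ℂ] H)) x‖ ^ 2 * r) ≤
          C' * ‖x‖ ^ 2 / (r - 1) := by
  refine ⟨2 * π * C ^ 2, fun T hT r hr _ x ↦ ?_⟩
  have hpartial (N : ℕ) : ∑ n ∈ range N, 2 * π * (r ^ 2)⁻¹ ^ (n + 1) * ‖(T ^ n) x‖ ^ 2 ≤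
      2 * π * (C ^ 2 * ‖x‖ ^ 2 * (r ^ 2)⁻¹ / (1 - (r ^ 2)⁻¹)) := by
    simp_rw [mul_assoc, ← mul_sum, ← mul_assoc]
    exact mul_le_mul_of_nonneg_left (sum_range_pow_succ_mul_norm_pow_apply_sq_le hT
      (by positivity) (inv_lt_one_of_one_lt₀ (one_lt_pow₀ hr two_ne_zero)) x N) (by positivity)
  have hlim := tendsto_sum_integral_norm_sq_inverse_sub_circleMap hT hr x
  have hr0 : 0 < r := zero_lt_one.trans hr
  have hr1 : 0 < r - 1 := sub_pos.mpr hr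
  have hq : 1 - (r ^ 2)⁻¹ = (r - 1) * (r + 1) / r ^ 2 := by field_simp; ring
  rw [integral_mul_const]
  calc _ ≤ 2 * π * (C ^ 2 * ‖x‖ ^ 2 * (r ^ 2)⁻¹ / (1 - (r ^ 2)⁻¹)) * r :=
        mul_le_mul_of_nonneg_right (le_of_tendsto' hlim hpartial) hr0.le
    _ = 2 * π * C ^ 2 * ‖x‖ ^ 2 / (r - 1) * (r / (r + 1)) := by
        rw [hq]
        field_simp
    _ ≤ 2 * π * C ^ 2 * ‖x‖ ^ 2 / (r - 1) :=
        mul_le_of_le_one_right (by positivity) ((div_le_one (by positivity)).mpr (by linarith))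
end

section
/- Let f : U → ℂ be defined on an open set U ⊆ ℂ, let K ⊂ U be compact, and suppose f is injective on K and locally bi-Lipschitz: every point x ∈ K has a ball B(x, r(x)) ⊆ U on which f is bi-Lipschitz. Then f is bi-Lipschitz on some open neighborhood of K; that is, there exist an open set W with K ⊆ W ⊆ U and constants 0 < c ≤ C with c|z-w| ≤ |f(z)-f(w)| ≤ C|z-w| for all z, w ∈ W. -/
/-!
By compactness the local bi-Lipschitz bounds can be taken uniform: there is one radius `ρ` and one
pair of constants `c ≤ C` valid on every ball `B(x, ρ)`, `x ∈ K`. On a thin neighbourhood of `K`,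
pairs of points closer than `ρ / 2` then lie in a common such ball. Pairs farther apart shadow pairs
of `K` at distance at least `ρ / 4`, whose images are at least some `δ > 0` apart by compactness
and injectivity; since the neighbourhood is bounded, this gives the lower bound, and the upper
bound comes from the boundedness of `f '' K`.
-/

open Metric Set

def BiLipschitzOn {X Y : Type*} [PseudoMetricSpace X] [PseudoMetricSpace Y]
    (f : X → Y) (s : Set X) (c C : ℝ) : Prop :=
  ∀ z ∈ s, ∀ w ∈ s, c * dist z w ≤ dist (f z) (f w) ∧ dist (f z) (f w) ≤ C * dist z w

namespace BiLipschitzOn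

variable {X Y : Type*} [PseudoMetricSpace X] [PseudoMetricSpace Y] {f : X → Y} {s t : Set X}
  {c C : ℝ}

theorem mono {c' C' : ℝ} (h : BiLipschitzOn f t c C) (hst : s ⊆ t) (hc : c' ≤ c) (hC : C ≤ C') :
    BiLipschitzOn f s c' C' := fun z hz w hw =>
  ⟨(mul_le_mul_of_nonneg_right hc dist_nonneg).trans (h z (hst hz) w (hst hw)).1,
    (h z (hst hz) w (hst hw)).2.trans (mul_le_mul_of_nonneg_right hC dist_nonneg)⟩

theorem continuousOn (h : BiLipschitzOn f s c C) : ContinuousOn f s :=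
  (LipschitzOnWith.of_dist_le_mul (K := C.toNNReal) fun z hz w hw =>
    (h z hz w hw).2.trans
      (mul_le_mul_of_nonneg_right (Real.le_coe_toNNReal C) dist_nonneg)).continuousOn

theorem of_near_of_far {a D m M : ℝ} (ha : 0 < a) (hD : 0 < D) (hm : 0 ≤ m)
    (hnear : ∀ z ∈ s, ∀ w ∈ s, dist z w < a →
      c * dist z w ≤ dist (f z) (f w) ∧ dist (f z) (f w) ≤ C * dist z w)
    (hfar : ∀ z ∈ s, ∀ w ∈ s, a ≤ dist z w → m ≤ dist (f z) (f w) ∧ dist (f z) (f w) ≤ M)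
    (hdiam : ∀ z ∈ s, ∀ w ∈ s, dist z w ≤ D) :
    BiLipschitzOn f s (min c (m / D)) (max C (M / a)) := by
  intro z hz w hw
  rcases lt_or_ge (dist z w) a with hzw | hzw
  · obtain ⟨hlower, hupper⟩ := hnear z hz w hw hzw
    exact ⟨(mul_le_mul_of_nonneg_right (min_le_left _ _) dist_nonneg).trans hlower,
      hupper.trans (mul_le_mul_of_nonneg_right (le_max_left _ _) dist_nonneg)⟩
  · obtain ⟨hlower, hupper⟩ := hfar z hz w hw hzw
    have hM : 0 ≤ M := dist_nonneg.trans hupper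
    constructor
    · calc min c (m / D) * dist z w ≤ m / D * dist z w :=
            mul_le_mul_of_nonneg_right (min_le_right _ _) dist_nonneg
        _ ≤ m / D * D := mul_le_mul_of_nonneg_left (hdiam z hz w hw) (div_nonneg hm hD.le)
        _ = m := div_mul_cancel₀ m hD.ne'
        _ ≤ dist (f z) (f w) := hlower
    · calc dist (f z) (f w) ≤ M / a * a := by rwa [div_mul_cancel₀ M ha.ne']
        _ ≤ max C (M / a) * dist z w := by gcongr; exact le_max_right _ _

end BiLipschitzOn

theorem biLipschitzOn_iff_norm {E F : Type*} [SeminormedAddCommGroup E]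
    [SeminormedAddCommGroup F] {f : E → F} {s : Set E} {c C : ℝ} :
    BiLipschitzOn f s c C ↔ ∀ z ∈ s, ∀ w ∈ s,
      c * ‖z - w‖ ≤ ‖f z - f w‖ ∧ ‖f z - f w‖ ≤ C * ‖z - w‖ := by
  simp only [BiLipschitzOn, dist_eq_norm]

section Compact

variable {X Y : Type*} [PseudoMetricSpace X] {f : X → Y} {K : Set X}

theorem IsCompact.exists_uniform_biLipschitzOn_ball [PseudoMetricSpace Y] (hK : IsCompact K)
    (hloc : ∀ x ∈ K, ∃ r > 0, ∃ c C : ℝ, 0 < c ∧ c ≤ C ∧ BiLipschitzOn f (ball x r) c C) :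
    ∃ ρ > 0, ∃ c C : ℝ, 0 < c ∧ c ≤ C ∧ ∀ x ∈ K, BiLipschitzOn f (ball x ρ) c C := by
  refine hK.induction_on ⟨1, one_pos, 1, 1, one_pos, le_rfl, fun _ h => h.elim⟩
    (fun s t hst ⟨ρ, hρ, c, C, hc, hcC, h⟩ => ⟨ρ, hρ, c, C, hc, hcC, fun x hx => h x (hst hx)⟩)
    ?_ ?_
  · rintro s t ⟨ρ₁, hρ₁, c₁, C₁, hc₁, hcC₁, h₁⟩ ⟨ρ₂, hρ₂, c₂, C₂, hc₂, hcC₂, h₂⟩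
    refine ⟨min ρ₁ ρ₂, lt_min hρ₁ hρ₂, min c₁ c₂, max C₁ C₂, lt_min hc₁ hc₂,
      (min_le_left _ _).trans (hcC₁.trans (le_max_left _ _)), ?_⟩
    rintro x (hx | hx)
    · exact (h₁ x hx).mono (ball_subset_ball (min_le_left _ _)) (min_le_left _ _) (le_max_left _ _)
    · exact (h₂ x hx).mono (ball_subset_ball (min_le_right _ _)) (min_le_right _ _)
        (le_max_right _ _)
  · intro x hx
    obtain ⟨r, hr, c, C, hc, hcC, h⟩ := hloc x hx
    refine ⟨ball x (r / 2), mem_nhdsWithin_of_mem_nhds (ball_mem_nhds x (half_pos hr)),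
      r / 2, half_pos hr, c, C, hc, hcC, fun y hy => h.mono ?_ le_rfl le_rfl⟩
    exact ball_subset_ball' (by linarith [mem_ball.1 hy])

theorem IsCompact.exists_pos_le_dist_of_injOn [MetricSpace Y] (hK : IsCompact K)
    (hf : ContinuousOn f K) (hinj : InjOn f K) {ε : ℝ} (hε : 0 < ε) :
    ∃ δ > 0, ∀ x ∈ K, ∀ y ∈ K, ε ≤ dist x y → δ ≤ dist (f x) (f y) := by
  set S := K ×ˢ K ∩ {p : X × X | ε ≤ dist p.1 p.2}
  have hS : IsCompact S := (hK.prod hK).inter_right (isClosed_le continuous_const continuous_dist)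
  have hcont : ContinuousOn (fun p : X × X => dist (f p.1) (f p.2)) S :=
    continuous_dist.comp_continuousOn ((hf.prodMap hf).mono inter_subset_left)
  obtain ⟨δ, hδ, hδS⟩ := hS.exists_forall_le' hcont (a := 0) fun p ⟨⟨hp₁, hp₂⟩, hp⟩ =>
    dist_pos.2 fun heq => (hε.trans_le hp).ne' (by rw [hinj hp₁ hp₂ heq, dist_self])
  exact ⟨δ, hδ, fun x hx y hy hxy => hδS (x, y) ⟨⟨hx, hy⟩, hxy⟩⟩

theorem IsCompact.exists_biLipschitzOn_thickening [MetricSpace Y] (hK : IsCompact K)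
    (hinj : InjOn f K) {ρ c C : ℝ} (hρ : 0 < ρ) (hc : 0 < c) (hcC : c ≤ C)
    (hball : ∀ x ∈ K, BiLipschitzOn f (ball x ρ) c C) :
    ∃ η > 0, ∃ c' C' : ℝ, 0 < c' ∧ c' ≤ C' ∧ BiLipschitzOn f (thickening η K) c' C' := by
  have hf : ContinuousOn f K := fun x hx =>
    ((hball x hx).continuousOn.continuousAt (ball_mem_nhds x hρ)).continuousWithinAt
  obtain ⟨δ, hδ, hδK⟩ := hK.exists_pos_le_dist_of_injOn hf hinj (ε := ρ / 4) (by positivity)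
  have hC : 0 < C := hc.trans_le hcC
  set η := min (ρ / 8) (δ / (4 * C))
  have hη : 0 < η := lt_min (by positivity) (by positivity)
  have hηρ : η ≤ ρ / 8 := min_le_left _ _
  have hCη : C * η ≤ δ / 4 := by
    calc C * η ≤ C * (δ / (4 * C)) := mul_le_mul_of_nonneg_left (min_le_right _ _) hC.le
      _ = δ / 4 := by field_simp
  have hshadow : ∀ z ∈ thickening η K, ∃ k ∈ K, dist z k < η ∧ dist (f z) (f k) ≤ C * η := by
    intro z hz
    obtain ⟨k, hk, hzk⟩ := mem_thickening_iff.1 hz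
    refine ⟨k, hk, hzk, ?_⟩
    calc dist (f z) (f k) ≤ C * dist z k :=
          ((hball k hk) z (mem_ball.2 (by linarith)) k (mem_ball_self hρ)).2
      _ ≤ C * η := mul_le_mul_of_nonneg_left hzk.le hC.le
  have hfK : Bornology.IsBounded (f '' K) := (hK.image_of_continuousOn hf).isBounded
  have hD : 0 < diam K + 2 * η := by linarith [diam_nonneg (s := K)]
  refine ⟨η, hη, _, _, lt_min hc (by positivity),
    (min_le_left _ _).trans (hcC.trans (le_max_left _ _)),
    BiLipschitzOn.of_near_of_far (a := ρ / 2) (M := diam (f '' K) + 2 * (C * η))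
      (half_pos hρ) hD (half_pos hδ).le ?_ ?_ ?_⟩
  · intro z hz w _ hzw
    obtain ⟨k, hk, hzk, -⟩ := hshadow z hz
    have hwk : dist w k < ρ := by linarith [dist_triangle w z k, dist_comm z w]
    exact hball k hk z (mem_ball.2 (by linarith)) w (mem_ball.2 hwk)
  · intro z hz w hw hzw
    obtain ⟨kz, hkz, hzkz, hfz⟩ := hshadow z hz
    obtain ⟨kw, hkw, hwkw, hfw⟩ := hshadow w hw
    have hk : ρ / 4 ≤ dist kz kw := by
      linarith [dist_triangle4 z kz kw w, dist_comm z kz, dist_comm kw w]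
    have hδk := hδK kz hkz kw hkw hk
    have hfk : dist (f kz) (f kw) ≤ diam (f '' K) :=
      dist_le_diam_of_mem hfK (mem_image_of_mem f hkz) (mem_image_of_mem f hkw)
    constructor
    · linarith [dist_triangle4 (f kz) (f z) (f w) (f kw), dist_comm (f z) (f kz)]
    · linarith [dist_triangle4 (f z) (f kz) (f kw) (f w), dist_comm (f kw) (f w)]
  · intro z hz w hw
    exact (dist_le_diam_of_mem hK.isBounded.thickening hz hw).trans (diam_thickening_le K hη.le)

end Compact

theorem stmt8 (f : ℂ → ℂ) (U : Set ℂ) (hU : IsOpen U) (K : Set ℂ)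
    (hK : IsCompact K) (hKU : K ⊆ U) (hinj : Set.InjOn f K)
    (hloc : ∀ x ∈ K, ∃ r > (0:ℝ), Metric.ball x r ⊆ U ∧
      ∃ c C : ℝ, 0 < c ∧ c ≤ C ∧
        ∀ z ∈ Metric.ball x r, ∀ w ∈ Metric.ball x r,
          c * ‖z - w‖ ≤ ‖f z - f w‖ ∧
          ‖f z - f w‖ ≤ C * ‖z - w‖) :
    ∃ W : Set ℂ, IsOpen W ∧ K ⊆ W ∧ W ⊆ U ∧
      ∃ c C : ℝ, 0 < c ∧ c ≤ C ∧
        ∀ z ∈ W, ∀ w ∈ W,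
          c * ‖z - w‖ ≤ ‖f z - f w‖ ∧
          ‖f z - f w‖ ≤ C * ‖z - w‖ := by
  obtain ⟨ρ, hρ, c, C, hc, hcC, hball⟩ := hK.exists_uniform_biLipschitzOn_ball fun x hx => by
    obtain ⟨r, hr, -, c, C, hc, hcC, h⟩ := hloc x hx
    exact ⟨r, hr, c, C, hc, hcC, biLipschitzOn_iff_norm.2 h⟩
  obtain ⟨η, hη, c', C', hc', hcC', h⟩ := hK.exists_biLipschitzOn_thickening hinj hρ hc hcC hball
  exact ⟨thickening η K ∩ U, isOpen_thickening.inter hU,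
    subset_inter (self_subset_thickening hη K) hKU, inter_subset_right, c', C', hc', hcC',
    biLipschitzOn_iff_norm.1 (h.mono inter_subset_left le_rfl le_rfl)⟩
end
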